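/- Let k ≥ 1, let f : S¹ → ℝ^{2k+1} be a continuous map on the unit circle S¹ ⊆ ℂ with f(−z) = −f(z) for all z ∈ S¹, and let w₀, …, w_{2k} be any 2k+1 points of S¹. Then there exist signs e₀, …, e_{2k} ∈ {+1, −1}, real numbers λ₀, …, λ_{2k} ≥ 0 with λ₀ + ⋯ + λ_{2k} = 1, and a point z ∈ S¹ such that Σ_{i=0}^{2k} λᵢ f(eᵢ·z·wᵢ) = 0. Moreover, if the vectors f(w₀), …, f(w_{2k}) all lie in some 2k-dimensional linear subspace of ℝ^{2k+1}, then one may take z = 1. -/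

import Mathlib

/-!
Evaluate `f` at the rotated points `z wᵢ`. These `2k+1` vectors of `ℝ^{2k+1}` have a
determinant that is continuous in `z` and odd (an odd number of columns changes sign), so by
connectedness of the circle it vanishes at some `z`. The resulting linear dependence
`∑ cᵢ f(z wᵢ) = 0`, normalised by `∑ |cᵢ|`, gives convex coefficients `|cᵢ| / ∑ |cⱼ|`, and the
signs of the `cᵢ` are absorbed into the arguments by oddness of `f`. If the `f(wᵢ)` lie in a
`2k`-dimensional subspace they are already dependent, and the same normalisation works at `z = 1`.
-/

open Metric Module

theorem IsPreconnected.exists_eq_zero_of_map_eq_neg {X : Type*} [TopologicalSpace X] {S : Set X}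
    (hS : IsPreconnected S) {g : X → ℝ} (hg : ContinuousOn g S) {a b : X} (ha : a ∈ S)
    (hb : b ∈ S) (hab : g b = -g a) : ∃ x ∈ S, g x = 0 := by
  have h0 : (0 : ℝ) ∈ Set.uIcc (g a) (g b) := by
    rw [hab, Set.mem_uIcc]
    rcases le_total (g a) 0 with h | h
    · exact Or.inl ⟨h, by linarith⟩
    · exact Or.inr ⟨by linarith, h⟩
  exact (hS.image g hg).ordConnected.uIcc_subset (Set.mem_image_of_mem g ha)
    (Set.mem_image_of_mem g hb) h0

section Determinant

variable {ι E : Type*} [Fintype ι] [DecidableEq ι] [NormedAddCommGroup E] [NormedSpace ℝ E]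

theorem Module.Basis.continuous_det (b : Basis ι ℝ E) : Continuous b.det := by
  rw [show (b.det : (ι → E) → ℝ) = fun v => (b.toMatrix v).det from funext b.det_apply]
  refine Continuous.matrix_det (continuous_pi fun i => continuous_pi fun j => ?_)
  simp only [Basis.toMatrix_apply]
  exact (continuous_apply i).comp (b.equivFunL.continuous.comp (continuous_apply j))

theorem Module.Basis.det_neg (b : Basis ι ℝ E) (v : ι → E) :
    b.det (-v) = (-1) ^ Fintype.card ι * b.det v := by
  have h := b.det.map_smul_univ (fun _ => -1) v
  simp only [neg_one_smul, Finset.prod_const, Finset.card_univ] at h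
  exact h

theorem exists_not_linearIndependent_of_odd_card [FiniteDimensional ℝ E]
    (hodd : Odd (Fintype.card ι)) (hcard : finrank ℝ E = Fintype.card ι)
    {X : Type*} [TopologicalSpace X] {S : Set X}
    (hS : IsPreconnected S) {v : X → ι → E} (hv : ContinuousOn v S) {a b : X} (ha : a ∈ S)
    (hb : b ∈ S) (hab : v b = -v a) : ∃ x ∈ S, ¬LinearIndependent ℝ (v x) := by
  let e : Basis ι ℝ E := (finBasisOfFinrankEq ℝ E hcard).reindex (Fintype.equivFin ι).symm
  obtain ⟨x, hx, hdet⟩ := hS.exists_eq_zero_of_map_eq_neg (e.continuous_det.comp_continuousOn hv)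
    ha hb (by simp [hab, e.det_neg, hodd.neg_one_pow])
  refine ⟨x, hx, fun hli => ?_⟩
  exact (e.is_basis_iff_det.mp ⟨hli, hli.span_eq_top_of_card_eq_finrank' hcard.symm⟩).ne_zero hdet

end Determinant

theorem exists_sign_convex_combination_eq_zero {ι E : Type*} [Fintype ι] [AddCommGroup E]
    [Module ℝ E] {v : ι → E} (hv : ¬LinearIndependent ℝ v) :
    ∃ e lam : ι → ℝ, (∀ i, e i = 1 ∨ e i = -1) ∧ (∀ i, 0 ≤ lam i) ∧ ∑ i, lam i = 1 ∧
      ∑ i, lam i • e i • v i = 0 := by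
  obtain ⟨c, hc, i₀, hi₀⟩ := Fintype.not_linearIndependent_iff.mp hv
  set s := ∑ j, |c j|
  have hs : 0 < s :=
    Finset.sum_pos' (fun j _ => abs_nonneg _) ⟨i₀, Finset.mem_univ _, abs_pos.mpr hi₀⟩
  let e i : ℝ := if 0 ≤ c i then 1 else -1
  have habs_mul i : |c i| * e i = c i := by
    by_cases h : 0 ≤ c i
    · simp [e, h, abs_of_nonneg h]
    · simp [e, h, abs_of_neg (not_le.mp h)]
  refine ⟨e, fun i => |c i| / s, fun i => by by_cases h : 0 ≤ c i <;> simp [e, h],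
    fun i => by positivity, by rw [← Finset.sum_div, div_self hs.ne'], ?_⟩
  calc ∑ i, (|c i| / s) • e i • v i = s⁻¹ • ∑ i, c i • v i := by
        rw [Finset.smul_sum]
        refine Finset.sum_congr rfl fun i _ => ?_
        rw [smul_smul, smul_smul]
        congr 1
        linear_combination s⁻¹ * habs_mul i
    _ = 0 := by rw [hc, smul_zero]

theorem not_linearIndependent_of_finrank_lt {ι E : Type*} [Fintype ι] [AddCommGroup E]
    [Module ℝ E] [FiniteDimensional ℝ E] {V : Submodule ℝ E} {v : ι → E} (hv : ∀ i, v i ∈ V)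
    (hV : finrank ℝ V < Fintype.card ι) : ¬LinearIndependent ℝ v := fun hli =>
  hV.not_ge <| finrank_span_eq_card hli ▸
    Submodule.finrank_mono (Submodule.span_le.mpr (Set.range_subset_iff.mpr hv))

section OddMap

variable {E : Type*} [AddCommGroup E] [Module ℝ E] {f : ℂ → E}

theorem map_sign_mul_of_odd (hodd : ∀ z ∈ sphere (0 : ℂ) 1, f (-z) = -f z) {e : ℝ}
    (he : e = 1 ∨ e = -1) {u : ℂ} (hu : u ∈ sphere (0 : ℂ) 1) : f (e * u) = e • f u := by
  rcases he with rfl | rfl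
  · simp
  · simp [hodd u hu]

theorem exists_sign_convex_combination_of_odd {ι : Type*} [Fintype ι]
    (hodd : ∀ z ∈ sphere (0 : ℂ) 1, f (-z) = -f z) {u : ι → ℂ}
    (hu : ∀ i, u i ∈ sphere (0 : ℂ) 1) (hdep : ¬LinearIndependent ℝ (fun i => f (u i))) :
    ∃ e lam : ι → ℝ, (∀ i, e i = 1 ∨ e i = -1) ∧ (∀ i, 0 ≤ lam i) ∧ ∑ i, lam i = 1 ∧
      ∑ i, lam i • f (e i * u i) = 0 := by
  obtain ⟨e, lam, he, hlam, hlam1, hsum⟩ := exists_sign_convex_combination_eq_zero hdep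
  refine ⟨e, lam, he, hlam, hlam1, ?_⟩
  simpa only [map_sign_mul_of_odd hodd (he _) (hu _)] using hsum

end OddMap

theorem stmt0 (k : ℕ)
    (f : ℂ → EuclideanSpace ℝ (Fin (2 * k + 1)))
    (hf : ContinuousOn f (sphere (0 : ℂ) 1))
    (hodd : ∀ z ∈ sphere (0 : ℂ) 1, f (-z) = -f z)
    (w : Fin (2 * k + 1) → ℂ) (hw : ∀ i, w i ∈ sphere (0 : ℂ) 1) :
    (∃ (e : Fin (2 * k + 1) → ℝ) (lam : Fin (2 * k + 1) → ℝ) (z : ℂ),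
      (∀ i, e i = 1 ∨ e i = -1) ∧ (∀ i, 0 ≤ lam i) ∧ (∑ i, lam i = 1) ∧
      z ∈ sphere (0 : ℂ) 1 ∧
      ∑ i, lam i • f ((e i : ℂ) * z * w i) = 0) ∧
    ((∃ V : Submodule ℝ (EuclideanSpace ℝ (Fin (2 * k + 1))),
        Module.finrank ℝ V = 2 * k ∧ ∀ i, f (w i) ∈ V) →
      ∃ (e : Fin (2 * k + 1) → ℝ) (lam : Fin (2 * k + 1) → ℝ),
        (∀ i, e i = 1 ∨ e i = -1) ∧ (∀ i, 0 ≤ lam i) ∧ (∑ i, lam i = 1) ∧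
        ∑ i, lam i • f ((e i : ℂ) * w i) = 0) := by
  have hzw : ∀ z ∈ sphere (0 : ℂ) 1, ∀ j, z * w j ∈ sphere (0 : ℂ) 1 := fun z hz j =>
    (Submonoid.unitSphere ℂ).mul_mem hz (hw j)
  constructor
  · have hv : ContinuousOn (fun z j => f (z * w j)) (sphere (0 : ℂ) 1) :=
      continuousOn_pi.mpr fun j =>
        hf.comp (continuousOn_id.mul continuousOn_const) fun z hz => hzw z hz j
    obtain ⟨z, hz, hdep⟩ := exists_not_linearIndependent_of_odd_card
      (by simp) (by simp) (isPreconnected_sphere (by simp) 0 1) hv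
      (by simp : (1 : ℂ) ∈ sphere 0 1) (by simp : (-1 : ℂ) ∈ sphere 0 1)
      (funext fun j => by simpa using hodd (w j) (hw j))
    obtain ⟨e, lam, he, hlam, hlam1, hsum⟩ :=
      exists_sign_convex_combination_of_odd hodd (hzw z hz) hdep
    exact ⟨e, lam, z, he, hlam, hlam1, hz, by simpa only [mul_assoc] using hsum⟩
  · rintro ⟨V, hV, hwV⟩
    exact exists_sign_convex_combination_of_odd hodd hw
      (not_linearIndependent_of_finrank_lt hwV (by simp [hV]))
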